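/- Let Σ = G + A : ℝ^N × ℝ^N → ℝ be three times continuously differentiable, where G is symmetric with G(x,x) = 0 and A is antisymmetric; set g_{ik} := [G_{,ik}], a_i := [A_{,i}], a_{ikl} := [A_{,ikl}], and g̃_{ik} := g_{ik} − ½(a_{i,k} − a_{k,i}). Suppose at a point x₀ both matrices (g_{ik}) and (g̃_{ik}) are invertible, with inverses (g^{ik}) and (g̃^{ik}). Then at x₀: (i) [Σ_{,ik′}] = −g̃_{ik}, so the mixed-derivative matrix (Σ_{,ik′}) is invertible at coincidence with inverse [Σ^{ik′}] = −g̃^{ik}; and (ii) the coincidence value of the two-point Christoffel symbol Γ̃^i_{kl} := ∑_s Σ^{is′} Σ_{,kls′} is [Γ̃^i_{kl}] = ∑_{s,p} g̃^{is} g_{ps} (γ^p_{kl} + β^p_{kl}), where γ^p_{kl} := ½ ∑_s g^{sp}(g_{ks,l} + g_{sl,k} − g_{lk,s}) and β^p_{kl} := ∑_s g^{sp}(−½(a_{k,ls} + a_{l,ks}) + a_{kls}). -/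

import Mathlib

/-- Partial derivative of a two-point function with respect to the `i`-th
coordinate of its first argument. -/
noncomputable def d1 {N : ℕ} (F : (Fin N → ℝ) → (Fin N → ℝ) → ℝ) (i : Fin N)
    (x x' : Fin N → ℝ) : ℝ :=
  fderiv ℝ (fun y => F y x') x (Pi.single i 1)

/-- Partial derivative of a two-point function with respect to the `i`-th
coordinate of its second argument. -/
noncomputable def d2 {N : ℕ} (F : (Fin N → ℝ) → (Fin N → ℝ) → ℝ) (i : Fin N)
    (x x' : Fin N → ℝ) : ℝ :=
  fderiv ℝ (fun y => F x y) x' (Pi.single i 1)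

/-- Partial derivative of a one-point function with respect to the `l`-th
coordinate. -/
noncomputable def pd {N : ℕ} (f : (Fin N → ℝ) → ℝ) (l : Fin N)
    (x : Fin N → ℝ) : ℝ :=
  fderiv ℝ f x (Pi.single l 1)

noncomputable def DD {E : Type*} [NormedAddCommGroup E] [NormedSpace ℝ E]
    (v : E) (F : E → ℝ) : E → ℝ := fun p => fderiv ℝ F p v

/-- uncurrying -/
def unc {N : ℕ} (F : (Fin N → ℝ) → (Fin N → ℝ) → ℝ) :
    (Fin N → ℝ) × (Fin N → ℝ) → ℝ := fun p => F p.1 p.2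

/-- first-slot basis directions -/
def eI {N : ℕ} (i : Fin N) : (Fin N → ℝ) × (Fin N → ℝ) := (Pi.single i 1, 0)

/-- second-slot basis directions -/
def fI {N : ℕ} (i : Fin N) : (Fin N → ℝ) × (Fin N → ℝ) := (0, Pi.single i 1)

section generic
variable {E : Type*} [NormedAddCommGroup E] [NormedSpace ℝ E] {F Φ Φ₁ Φ₂ : E → ℝ}

lemma contDiff_DD {n m : WithTop ℕ∞} (hF : ContDiff ℝ m F) (h : n + 1 ≤ m) (v : E) :
    ContDiff ℝ n (DD v F) :=
  (ContinuousLinearMap.apply ℝ ℝ v).contDiff.comp (hF.fderiv_right h)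

lemma DD_symm2 (hF : ContDiff ℝ 2 F) (u v : E) (p : E) :
    DD u (DD v F) p = DD v (DD u F) p := by
  have hsymm : IsSymmSndFDerivAt ℝ F p := hF.contDiffAt.isSymmSndFDerivAt (by simp)
  have hdiff : DifferentiableAt ℝ (fderiv ℝ F) p :=
    (hF.fderiv_right (m := 1) le_rfl).differentiable one_ne_zero p
  have key : ∀ w z : E, DD w (DD z F) p = fderiv ℝ (fderiv ℝ F) p w z := by
    intro w z
    show fderiv ℝ (fun q => fderiv ℝ F q z) p w = _
    have h : (fun q => fderiv ℝ F q z)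
        = fun q => (ContinuousLinearMap.apply ℝ ℝ z) (fderiv ℝ F q) := rfl
    rw [h, fderiv_comp' p ((ContinuousLinearMap.apply ℝ ℝ z).differentiableAt) hdiff]
    simp [ContinuousLinearMap.comp_apply]
  rw [key u v, key v u, hsymm.eq v u]

lemma dd_diff0 (hΦ : ContDiff ℝ 3 Φ) : Differentiable ℝ Φ :=
  hΦ.differentiable (by norm_num)

lemma dd_cd2 (hΦ : ContDiff ℝ 3 Φ) (u : E) : ContDiff ℝ 2 (DD u Φ) :=
  contDiff_DD hΦ (by norm_num) u

lemma dd_cd1 (hΦ : ContDiff ℝ 3 Φ) (u v : E) : ContDiff ℝ 1 (DD v (DD u Φ)) :=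
  contDiff_DD (dd_cd2 hΦ u) (by norm_num) v

lemma dd_diff1 (hΦ : ContDiff ℝ 3 Φ) (u : E) : Differentiable ℝ (DD u Φ) :=
  (dd_cd2 hΦ u).differentiable (by norm_num)

lemma dd_diff2 (hΦ : ContDiff ℝ 3 Φ) (u v : E) : Differentiable ℝ (DD v (DD u Φ)) :=
  (dd_cd1 hΦ u v).differentiable (by norm_num)

lemma DD2_comm (hΦ : ContDiff ℝ 3 Φ) (u v : E) (p : E) :
    DD u (DD v Φ) p = DD v (DD u Φ) p :=
  DD_symm2 (hΦ.of_le (by norm_num)) u v p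

lemma DD3_comm_outer (hΦ : ContDiff ℝ 3 Φ) (u v w : E) (p : E) :
    DD w (DD v (DD u Φ)) p = DD v (DD w (DD u Φ)) p :=
  DD_symm2 (dd_cd2 hΦ u) w v p

lemma DD3_comm_inner (hΦ : ContDiff ℝ 3 Φ) (u v w : E) (p : E) :
    DD w (DD v (DD u Φ)) p = DD w (DD u (DD v Φ)) p := by
  rw [show DD v (DD u Φ) = DD u (DD v Φ) from funext fun r => DD2_comm hΦ v u r]

lemma DD_add_pt {p : E} (h₁ : DifferentiableAt ℝ Φ₁ p) (h₂ : DifferentiableAt ℝ Φ₂ p)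
    (v : E) : DD v (fun q => Φ₁ q + Φ₂ q) p = DD v Φ₁ p + DD v Φ₂ p := by
  show fderiv ℝ _ p v = _
  rw [fderiv_fun_add h₁ h₂]; rfl

lemma DD_neg_pt (p : E) (v : E) : DD v (fun q => -Φ q) p = -DD v Φ p := by
  show fderiv ℝ _ p v = _
  rw [fderiv_fun_neg]; rfl

end generic

section bridge
variable {N : ℕ}

lemma d1_eq {F : (Fin N → ℝ) → (Fin N → ℝ) → ℝ} {Φ : (Fin N → ℝ) × (Fin N → ℝ) → ℝ}
    (hF : ∀ y y', F y y' = Φ (y, y')) {x x' : Fin N → ℝ}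
    (hΦ : DifferentiableAt ℝ Φ (x, x')) (i : Fin N) :
    d1 F i x x' = DD (eI i) Φ (x, x') := by
  have h1 : HasFDerivAt (fun y : Fin N → ℝ => (y, x'))
      ((ContinuousLinearMap.id ℝ (Fin N → ℝ)).prod 0) x :=
    (hasFDerivAt_id x).prodMk (hasFDerivAt_const x' x)
  have h2 : HasFDerivAt (fun y => Φ (y, x'))
      ((fderiv ℝ Φ (x, x')).comp ((ContinuousLinearMap.id ℝ (Fin N → ℝ)).prod 0)) x :=
    hΦ.hasFDerivAt.comp x h1
  have h3 : (fun y => F y x') = fun y => Φ (y, x') := by funext y; exact hF y x'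
  show fderiv ℝ (fun y => F y x') x (Pi.single i 1) = _
  rw [h3, h2.fderiv]
  rfl

lemma d2_eq {F : (Fin N → ℝ) → (Fin N → ℝ) → ℝ} {Φ : (Fin N → ℝ) × (Fin N → ℝ) → ℝ}
    (hF : ∀ y y', F y y' = Φ (y, y')) {x x' : Fin N → ℝ}
    (hΦ : DifferentiableAt ℝ Φ (x, x')) (i : Fin N) :
    d2 F i x x' = DD (fI i) Φ (x, x') := by
  have h1 : HasFDerivAt (fun y : Fin N → ℝ => (x, y))
      ((0 : (Fin N → ℝ) →L[ℝ] (Fin N → ℝ)).prod (ContinuousLinearMap.id ℝ (Fin N → ℝ))) x' :=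
    (hasFDerivAt_const x x').prodMk (hasFDerivAt_id x')
  have h2 : HasFDerivAt (fun y => Φ (x, y))
      ((fderiv ℝ Φ (x, x')).comp ((0 : (Fin N → ℝ) →L[ℝ] (Fin N → ℝ)).prod
        (ContinuousLinearMap.id ℝ (Fin N → ℝ)))) x' :=
    hΦ.hasFDerivAt.comp x' h1
  have h3 : (fun y => F x y) = fun y => Φ (x, y) := by funext y; exact hF x y
  show fderiv ℝ (fun y => F x y) x' (Pi.single i 1) = _
  rw [h3, h2.fderiv]
  rfl

lemma pd_diag {f : (Fin N → ℝ) → ℝ} {Φ : (Fin N → ℝ) × (Fin N → ℝ) → ℝ}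
    (hf : ∀ y, f y = Φ (y, y)) {x : Fin N → ℝ}
    (hΦ : DifferentiableAt ℝ Φ (x, x)) (l : Fin N) :
    pd f l x = DD (eI l) Φ (x, x) + DD (fI l) Φ (x, x) := by
  have h1 : HasFDerivAt (fun y : Fin N → ℝ => (y, y))
      ((ContinuousLinearMap.id ℝ (Fin N → ℝ)).prod (ContinuousLinearMap.id ℝ (Fin N → ℝ))) x :=
    (hasFDerivAt_id x).prodMk (hasFDerivAt_id x)
  have h2 : HasFDerivAt (fun y => Φ (y, y))
      ((fderiv ℝ Φ (x, x)).comp ((ContinuousLinearMap.id ℝ (Fin N → ℝ)).prod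
        (ContinuousLinearMap.id ℝ (Fin N → ℝ)))) x :=
    HasFDerivAt.comp (f := fun y : Fin N → ℝ => (y, y)) x hΦ.hasFDerivAt h1
  have h3 : f = fun y => Φ (y, y) := by funext y; exact hf y
  show fderiv ℝ f x (Pi.single l 1) = _
  rw [h3, h2.fderiv]
  show fderiv ℝ Φ (x, x) (Pi.single l 1, Pi.single l 1) = _
  have h4 : (Pi.single l (1:ℝ), Pi.single l (1:ℝ)) = eI l + fI l := by
    simp [eI, fI, Prod.ext_iff]
  rw [h4, map_add]
  rfl

lemma DD_comp_swap {Ψ : (Fin N → ℝ) × (Fin N → ℝ) → ℝ} (hΨ : Differentiable ℝ Ψ)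
    (v : (Fin N → ℝ) × (Fin N → ℝ)) :
    DD v (fun p => Ψ (Prod.swap p)) = fun p => DD (Prod.swap v) Ψ (Prod.swap p) := by
  funext p
  have h1 : HasFDerivAt (fun p : (Fin N → ℝ) × (Fin N → ℝ) => Ψ (Prod.swap p))
      ((fderiv ℝ Ψ (Prod.swap p)).comp
        ((ContinuousLinearEquiv.prodComm ℝ (Fin N → ℝ) (Fin N → ℝ)) :
          ((Fin N → ℝ) × (Fin N → ℝ)) →L[ℝ] ((Fin N → ℝ) × (Fin N → ℝ)))) p :=
    (hΨ (Prod.swap p)).hasFDerivAt.comp p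
      ((ContinuousLinearEquiv.prodComm ℝ (Fin N → ℝ) (Fin N → ℝ)).hasFDerivAt)
  show fderiv ℝ _ p v = _
  rw [h1.fderiv]; rfl

lemma DD_comp_swap_neg {Ψ : (Fin N → ℝ) × (Fin N → ℝ) → ℝ} (hΨ : Differentiable ℝ Ψ)
    (v : (Fin N → ℝ) × (Fin N → ℝ)) :
    DD v (fun p => -Ψ (Prod.swap p)) = fun p => -DD (Prod.swap v) Ψ (Prod.swap p) := by
  have h : (fun p : (Fin N → ℝ) × (Fin N → ℝ) => -Ψ (Prod.swap p))
      = fun p => (fun q => -Ψ q) (Prod.swap p) := rfl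
  rw [h, DD_comp_swap (Ψ := fun q => -Ψ q) hΨ.neg]
  funext p
  rw [DD_neg_pt]

variable {Φ : (Fin N → ℝ) × (Fin N → ℝ) → ℝ}

lemma sym_swap1 (hΦ : ContDiff ℝ 3 Φ) (hsw : Φ = fun p => Φ (Prod.swap p))
    (v : (Fin N → ℝ) × (Fin N → ℝ)) :
    DD v Φ = fun p => DD (Prod.swap v) Φ (Prod.swap p) := by
  conv_lhs => rw [hsw]
  exact DD_comp_swap (dd_diff0 hΦ) v

lemma sym_swap2 (hΦ : ContDiff ℝ 3 Φ) (hsw : Φ = fun p => Φ (Prod.swap p))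
    (u v : (Fin N → ℝ) × (Fin N → ℝ)) :
    DD v (DD u Φ) = fun p => DD (Prod.swap v) (DD (Prod.swap u) Φ) (Prod.swap p) := by
  conv_lhs => rw [sym_swap1 hΦ hsw u]
  exact DD_comp_swap (dd_diff1 hΦ _) v

lemma sym_swap3 (hΦ : ContDiff ℝ 3 Φ) (hsw : Φ = fun p => Φ (Prod.swap p))
    (u v w : (Fin N → ℝ) × (Fin N → ℝ)) :
    DD w (DD v (DD u Φ)) = fun p =>
      DD (Prod.swap w) (DD (Prod.swap v) (DD (Prod.swap u) Φ)) (Prod.swap p) := by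
  conv_lhs => rw [sym_swap2 hΦ hsw u v]
  exact DD_comp_swap (dd_diff2 hΦ _ _) w

lemma asym_swap1 (hΦ : ContDiff ℝ 3 Φ) (hsw : Φ = fun p => -Φ (Prod.swap p))
    (v : (Fin N → ℝ) × (Fin N → ℝ)) :
    DD v Φ = fun p => -DD (Prod.swap v) Φ (Prod.swap p) := by
  conv_lhs => rw [hsw]
  exact DD_comp_swap_neg (dd_diff0 hΦ) v

lemma asym_swap2 (hΦ : ContDiff ℝ 3 Φ) (hsw : Φ = fun p => -Φ (Prod.swap p))
    (u v : (Fin N → ℝ) × (Fin N → ℝ)) :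
    DD v (DD u Φ) = fun p => -DD (Prod.swap v) (DD (Prod.swap u) Φ) (Prod.swap p) := by
  conv_lhs => rw [asym_swap1 hΦ hsw u]
  exact DD_comp_swap_neg (dd_diff1 hΦ _) v

lemma asym_swap3 (hΦ : ContDiff ℝ 3 Φ) (hsw : Φ = fun p => -Φ (Prod.swap p))
    (u v w : (Fin N → ℝ) × (Fin N → ℝ)) :
    DD w (DD v (DD u Φ)) = fun p =>
      -DD (Prod.swap w) (DD (Prod.swap v) (DD (Prod.swap u) Φ)) (Prod.swap p) := by
  conv_lhs => rw [asym_swap2 hΦ hsw u v]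
  exact DD_comp_swap_neg (dd_diff2 hΦ _ _) w

end bridge

lemma contract {n : ℕ} (A : Matrix (Fin n) (Fin n) ℝ) (hA : IsUnit A.det)
    (c : Fin n → ℝ) (s : Fin n) :
    ∑ p, A p s * ∑ t, A⁻¹ t p * c t = c s := by
  have h := Matrix.nonsing_inv_mul A hA
  calc ∑ p, A p s * ∑ t, A⁻¹ t p * c t
      = ∑ p, ∑ t, A⁻¹ t p * A p s * c t := by
        refine Finset.sum_congr rfl fun p _ => ?_
        rw [Finset.mul_sum]
        exact Finset.sum_congr rfl fun t _ => by ring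
    _ = ∑ t, ∑ p, A⁻¹ t p * A p s * c t := Finset.sum_comm
    _ = ∑ t, (A⁻¹ * A) t s * c t := by
        refine Finset.sum_congr rfl fun t _ => ?_
        rw [Matrix.mul_apply, Finset.sum_mul]
    _ = c s := by rw [h]; simp [Matrix.one_apply]

/-- for a nonsymmetric C³ world function `Σ = G + A`, at a point
`x₀` where `g` and `g̃ = g − ½(a_{i,k} − a_{k,i})` are invertible:
(i) the mixed-derivative matrix `[Σ_{,ik′}] = −g̃_{ik}` is invertible with
inverse `[Σ^{ik′}] = −g̃^{ik}`, and (ii) the coincidence value of the two-point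
Christoffel symbol `Γ̃^i_{kl} = ∑_s Σ^{is′} Σ_{,kls′}` equals
`∑_{s,p} g̃^{is} g_{ps} (γ^p_{kl} + β^p_{kl})`. -/
theorem nonsymmetric_christoffel_at_coincidence
    (N : ℕ) (S G A : (Fin N → ℝ) → (Fin N → ℝ) → ℝ)
    (hdecomp : ∀ x x', S x x' = G x x' + A x x')
    (hS : ContDiff ℝ 3 fun p : (Fin N → ℝ) × (Fin N → ℝ) => S p.1 p.2)
    (hsym : ∀ x x', G x x' = G x' x)
    (hzero : ∀ x, G x x = 0)
    (hanti : ∀ x x', A x x' = - A x' x)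
    (x₀ : Fin N → ℝ)
    (g : Fin N → Fin N → (Fin N → ℝ) → ℝ)
    (hg : ∀ i k x, g i k x = d1 (d1 G i) k x x)
    (a : Fin N → (Fin N → ℝ) → ℝ)
    (ha : ∀ i x, a i x = d1 A i x x)
    (aikl : Fin N → Fin N → Fin N → (Fin N → ℝ) → ℝ)
    (haikl : ∀ i k l x, aikl i k l x = d1 (d1 (d1 A i) k) l x x)
    (tg : Fin N → Fin N → (Fin N → ℝ) → ℝ)
    (htg : ∀ i k x, tg i k x =
      g i k x - (1 / 2) * (pd (a i) k x - pd (a k) i x))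
    (gmat tgmat : Matrix (Fin N) (Fin N) ℝ)
    (hgmat : ∀ i k, gmat i k = g i k x₀)
    (htgmat : ∀ i k, tgmat i k = tg i k x₀)
    (hgu : IsUnit gmat.det) (htgu : IsUnit tgmat.det)
    (M : Matrix (Fin N) (Fin N) ℝ)
    (hM : ∀ i k, M i k = d2 (d1 S i) k x₀ x₀)
    (γ β : Fin N → Fin N → Fin N → ℝ)
    (hγ : ∀ p k l, γ p k l = (1 / 2) * ∑ s, gmat⁻¹ s p *
      (pd (g k s) l x₀ + pd (g s l) k x₀ - pd (g l k) s x₀))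
    (hβ : ∀ p k l, β p k l = ∑ s, gmat⁻¹ s p *
      (-(1 / 2) * (pd (pd (a k) l) s x₀ + pd (pd (a l) k) s x₀)
        + aikl k l s x₀)) :
    M = -tgmat ∧ IsUnit M.det ∧ M⁻¹ = -(tgmat⁻¹) ∧
    (∀ i k l, ∑ s, M⁻¹ i s * d2 (d1 (d1 S k) l) s x₀ x₀ =
      ∑ s, ∑ p, tgmat⁻¹ i s * gmat p s * (γ p k l + β p k l)) := by
  have hS3 : ContDiff ℝ 3 (unc S) := hS
  have hSwapCd : ContDiff ℝ 3 (fun p : (Fin N → ℝ) × (Fin N → ℝ) => S p.2 p.1) :=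
    hS.comp (contDiff_snd.prodMk contDiff_fst)
  have hG3 : ContDiff ℝ 3 (unc G) := by
    have h2 : unc G = fun p : (Fin N → ℝ) × (Fin N → ℝ) => (S p.1 p.2 + S p.2 p.1) / 2 := by
      funext p
      show G p.1 p.2 = _
      have e1 := hdecomp p.1 p.2
      have e2 := hdecomp p.2 p.1
      have e3 := hsym p.1 p.2
      have e4 := hanti p.1 p.2
      linarith
    rw [h2]
    exact (hS.add hSwapCd).div_const 2
  have hA3 : ContDiff ℝ 3 (unc A) := by
    have h2 : unc A = fun p : (Fin N → ℝ) × (Fin N → ℝ) => (S p.1 p.2 - S p.2 p.1) / 2 := by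
      funext p
      show A p.1 p.2 = _
      have e1 := hdecomp p.1 p.2
      have e2 := hdecomp p.2 p.1
      have e3 := hsym p.1 p.2
      have e4 := hanti p.1 p.2
      linarith
    rw [h2]
    exact (hS.sub hSwapCd).div_const 2
  have hGsw : unc G = fun p => unc G (Prod.swap p) := funext fun p => hsym p.1 p.2
  have hAsw : unc A = fun p => -unc A (Prod.swap p) := funext fun p => hanti p.1 p.2
  -- bridges from d1/d2/pd to DD
  have hd1G : ∀ (i : Fin N) y y', d1 G i y y' = DD (eI i) (unc G) (y, y') :=
    fun i y y' => d1_eq (fun _ _ => rfl) (dd_diff0 hG3 _) i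
  have hgDD : ∀ (i k : Fin N) x, g i k x = DD (eI k) (DD (eI i) (unc G)) (x, x) := by
    intro i k x
    rw [hg i k x]
    exact d1_eq (hd1G i) (dd_diff1 hG3 _ _) k
  have hd1A : ∀ (i : Fin N) y y', d1 A i y y' = DD (eI i) (unc A) (y, y') :=
    fun i y y' => d1_eq (fun _ _ => rfl) (dd_diff0 hA3 _) i
  have haDD : ∀ (i : Fin N) x, a i x = DD (eI i) (unc A) (x, x) := by
    intro i x; rw [ha i x]; exact hd1A i x x
  have hd2A : ∀ (i k : Fin N) y y', d1 (d1 A i) k y y' = DD (eI k) (DD (eI i) (unc A)) (y, y') :=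
    fun i k y y' => d1_eq (hd1A i) (dd_diff1 hA3 _ _) k
  have haiklDD : ∀ (i k l : Fin N) x,
      aikl i k l x = DD (eI l) (DD (eI k) (DD (eI i) (unc A))) (x, x) := by
    intro i k l x
    rw [haikl i k l x]
    exact d1_eq (hd2A i k) (dd_diff2 hA3 _ _ _) l
  have hd1S : ∀ (i : Fin N) y y', d1 S i y y' = DD (eI i) (unc S) (y, y') :=
    fun i y y' => d1_eq (fun _ _ => rfl) (dd_diff0 hS3 _) i
  have hMDD : ∀ i k, M i k = DD (fI k) (DD (eI i) (unc S)) (x₀, x₀) := by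
    intro i k
    rw [hM i k]
    exact d2_eq (hd1S i) (dd_diff1 hS3 _ _) k
  have hd2S : ∀ (k l : Fin N) y y', d1 (d1 S k) l y y' = DD (eI l) (DD (eI k) (unc S)) (y, y') :=
    fun k l y y' => d1_eq (hd1S k) (dd_diff1 hS3 _ _) l
  have hD3S : ∀ k l s : Fin N, d2 (d1 (d1 S k) l) s x₀ x₀
      = DD (fI s) (DD (eI l) (DD (eI k) (unc S))) (x₀, x₀) :=
    fun k l s => d2_eq (hd2S k l) (dd_diff2 hS3 _ _ _) s
  have hpd_g : ∀ (i k l : Fin N) x, pd (g i k) l x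
      = DD (eI l) (DD (eI k) (DD (eI i) (unc G))) (x, x)
      + DD (fI l) (DD (eI k) (DD (eI i) (unc G))) (x, x) :=
    fun i k l x => pd_diag (fun y => hgDD i k y) (dd_diff2 hG3 _ _ _) l
  have hpd_a : ∀ (i k : Fin N) x, pd (a i) k x
      = DD (eI k) (DD (eI i) (unc A)) (x, x)
      + DD (fI k) (DD (eI i) (unc A)) (x, x) :=
    fun i k x => pd_diag (fun y => haDD i y) (dd_diff1 hA3 _ _) k
  have hpd2a : ∀ k l s : Fin N, pd (pd (a k) l) s x₀
      = DD (eI s) (DD (eI l) (DD (eI k) (unc A))) (x₀, x₀)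
      + DD (eI s) (DD (fI l) (DD (eI k) (unc A))) (x₀, x₀)
      + (DD (fI s) (DD (eI l) (DD (eI k) (unc A))) (x₀, x₀)
      + DD (fI s) (DD (fI l) (DD (eI k) (unc A))) (x₀, x₀)) := by
    intro k l s
    have h1 := pd_diag (f := pd (a k) l) (x := x₀)
      (Φ := fun p => DD (eI l) (DD (eI k) (unc A)) p + DD (fI l) (DD (eI k) (unc A)) p)
      (fun y => hpd_a k l y)
      ((dd_diff2 hA3 (eI k) (eI l) (x₀, x₀)).add (dd_diff2 hA3 (eI k) (fI l) (x₀, x₀))) s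
    rw [h1, DD_add_pt (dd_diff2 hA3 (eI k) (eI l) _) (dd_diff2 hA3 (eI k) (fI l) _),
        DD_add_pt (dd_diff2 hA3 (eI k) (eI l) _) (dd_diff2 hA3 (eI k) (fI l) _)]
  -- zero identities for G on the diagonal
  have hpd0 : ∀ (l : Fin N) (x : Fin N → ℝ), pd (fun _ : Fin N → ℝ => (0:ℝ)) l x = 0 := by
    intro l x; simp [pd]
  have z1 : ∀ (l : Fin N) x, DD (eI l) (unc G) (x, x) + DD (fI l) (unc G) (x, x) = 0 := by
    intro l x
    have h0 := pd_diag (f := fun _ : Fin N → ℝ => (0:ℝ)) (Φ := unc G) (x := x)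
      (fun y => (hzero y).symm) (dd_diff0 hG3 _) l
    rw [hpd0 l x] at h0
    linarith
  have zG : ∀ (l : Fin N) x, DD (eI l) (unc G) (x, x) = 0 := by
    intro l x
    have h2 : DD (fI l) (unc G) (x, x) = DD (eI l) (unc G) (x, x) :=
      congrFun (sym_swap1 hG3 hGsw (fI l)) (x, x)
    have h1 := z1 l x
    linarith
  have G1 : ∀ (i k : Fin N) x, DD (fI k) (DD (eI i) (unc G)) (x, x) = -g i k x := by
    intro i k x
    have h0 := pd_diag (f := fun _ : Fin N → ℝ => (0:ℝ)) (Φ := DD (eI i) (unc G)) (x := x)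
      (fun y => (zG i y).symm) (dd_diff1 hG3 _ _) k
    rw [hpd0 k x] at h0
    have h1 := hgDD i k x
    linarith
  have G2 : ∀ i k l : Fin N, DD (eI l) (DD (fI k) (DD (eI i) (unc G))) (x₀, x₀)
      + DD (fI l) (DD (fI k) (DD (eI i) (unc G))) (x₀, x₀) = -pd (g i k) l x₀ := by
    intro i k l
    have h0 := pd_diag (f := fun y => -g i k y) (Φ := DD (fI k) (DD (eI i) (unc G))) (x := x₀)
      (fun y => (G1 i k y).symm) (dd_diff2 hG3 _ _ _) l
    have h1 : pd (fun y => -g i k y) l x₀ = -pd (g i k) l x₀ := by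
      simp [pd, fderiv_fun_neg]
    linarith
  -- splitting S = G + A at second and third order
  have split2 : ∀ (u v : (Fin N → ℝ) × (Fin N → ℝ)) p, DD v (DD u (unc S)) p
      = DD v (DD u (unc G)) p + DD v (DD u (unc A)) p := by
    have hSeq : unc S = fun p => unc G p + unc A p := funext fun p => hdecomp p.1 p.2
    have s1 : ∀ u : (Fin N → ℝ) × (Fin N → ℝ),
        DD u (unc S) = fun p => DD u (unc G) p + DD u (unc A) p := by
      intro u; funext p
      rw [hSeq]
      exact DD_add_pt (dd_diff0 hG3 p) (dd_diff0 hA3 p) u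
    intro u v p
    rw [s1 u]
    exact DD_add_pt (dd_diff1 hG3 u p) (dd_diff1 hA3 u p) v
  have split3 : ∀ (u v w : (Fin N → ℝ) × (Fin N → ℝ)) p, DD w (DD v (DD u (unc S))) p
      = DD w (DD v (DD u (unc G))) p + DD w (DD v (DD u (unc A))) p := by
    intro u v w p
    have s2 : DD v (DD u (unc S)) = fun p => DD v (DD u (unc G)) p + DD v (DD u (unc A)) p :=
      funext fun p => split2 u v p
    rw [s2]
    exact DD_add_pt (dd_diff2 hG3 u v p) (dd_diff2 hA3 u v p) w
  -- Part (i)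
  have hMeq : M = -tgmat := by
    ext i k
    have h1 := hMDD i k
    have h2 := split2 (eI i) (fI k) (x₀, x₀)
    have h3 := G1 i k x₀
    have hA2s : DD (eI k) (DD (eI i) (unc A)) (x₀, x₀)
        = DD (eI i) (DD (eI k) (unc A)) (x₀, x₀) :=
      DD2_comm hA3 (eI k) (eI i) (x₀, x₀)
    have hAm : DD (fI i) (DD (eI k) (unc A)) (x₀, x₀)
        = -DD (eI i) (DD (fI k) (unc A)) (x₀, x₀) :=
      congrFun (asym_swap2 hA3 hAsw (eI k) (fI i)) (x₀, x₀)
    have hAm2 : DD (eI i) (DD (fI k) (unc A)) (x₀, x₀)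
        = DD (fI k) (DD (eI i) (unc A)) (x₀, x₀) :=
      DD2_comm hA3 (eI i) (fI k) (x₀, x₀)
    have h4 := hpd_a i k x₀
    have h5 := hpd_a k i x₀
    have h6 := htg i k x₀
    have h7 := htgmat i k
    rw [Matrix.neg_apply]
    linarith
  have hdetM : IsUnit M.det := by
    rw [hMeq, Matrix.det_neg]
    exact ((isUnit_one.neg).pow _).mul htgu
  have hMinv : M⁻¹ = -(tgmat⁻¹) := by
    have h : M * (-(tgmat⁻¹)) = 1 := by
      rw [hMeq, Matrix.neg_mul, Matrix.mul_neg, neg_neg, Matrix.mul_nonsing_inv _ htgu]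
    exact Matrix.inv_eq_right_inv h
  -- Part (ii) : third-order coincidence values
  have keyG : ∀ k l s : Fin N, DD (fI s) (DD (eI l) (DD (eI k) (unc G))) (x₀, x₀)
      = -((1/2) * (pd (g k s) l x₀ + pd (g s l) k x₀ - pd (g l k) s x₀)) := by
    intro k l s
    have p1 := hpd_g k s l x₀
    have p2 := hpd_g s l k x₀
    have p3 := hpd_g l k s x₀
    have r := G2 k s l
    have n1 : DD (eI l) (DD (fI s) (DD (eI k) (unc G))) (x₀, x₀)
        = DD (fI s) (DD (eI l) (DD (eI k) (unc G))) (x₀, x₀) :=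
      DD3_comm_outer hG3 (eI k) (fI s) (eI l) (x₀, x₀)
    have n2 : DD (fI l) (DD (fI s) (DD (eI k) (unc G))) (x₀, x₀)
        = DD (fI k) (DD (eI l) (DD (eI s) (unc G))) (x₀, x₀) := by
      have h1 : DD (fI l) (DD (fI s) (DD (eI k) (unc G))) (x₀, x₀)
          = DD (eI l) (DD (eI s) (DD (fI k) (unc G))) (x₀, x₀) :=
        congrFun (sym_swap3 hG3 hGsw (eI k) (fI s) (fI l)) (x₀, x₀)
      have h2 : DD (eI l) (DD (eI s) (DD (fI k) (unc G))) (x₀, x₀)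
          = DD (eI l) (DD (fI k) (DD (eI s) (unc G))) (x₀, x₀) :=
        DD3_comm_inner hG3 (fI k) (eI s) (eI l) (x₀, x₀)
      have h3 : DD (eI l) (DD (fI k) (DD (eI s) (unc G))) (x₀, x₀)
          = DD (fI k) (DD (eI l) (DD (eI s) (unc G))) (x₀, x₀) :=
        DD3_comm_outer hG3 (eI s) (fI k) (eI l) (x₀, x₀)
      rw [h1, h2, h3]
    have n3 : DD (fI s) (DD (eI k) (DD (eI l) (unc G))) (x₀, x₀)
        = DD (fI s) (DD (eI l) (DD (eI k) (unc G))) (x₀, x₀) :=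
      DD3_comm_inner hG3 (eI l) (eI k) (fI s) (x₀, x₀)
    have m1 : DD (eI k) (DD (eI l) (DD (eI s) (unc G))) (x₀, x₀)
        = DD (eI l) (DD (eI s) (DD (eI k) (unc G))) (x₀, x₀) := by
      have h1 : DD (eI k) (DD (eI l) (DD (eI s) (unc G))) (x₀, x₀)
          = DD (eI l) (DD (eI k) (DD (eI s) (unc G))) (x₀, x₀) :=
        DD3_comm_outer hG3 (eI s) (eI l) (eI k) (x₀, x₀)
      have h2 : DD (eI l) (DD (eI k) (DD (eI s) (unc G))) (x₀, x₀)
          = DD (eI l) (DD (eI s) (DD (eI k) (unc G))) (x₀, x₀) :=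
        DD3_comm_inner hG3 (eI s) (eI k) (eI l) (x₀, x₀)
      rw [h1, h2]
    have m2 : DD (eI s) (DD (eI k) (DD (eI l) (unc G))) (x₀, x₀)
        = DD (eI l) (DD (eI s) (DD (eI k) (unc G))) (x₀, x₀) := by
      have h1 : DD (eI s) (DD (eI k) (DD (eI l) (unc G))) (x₀, x₀)
          = DD (eI s) (DD (eI l) (DD (eI k) (unc G))) (x₀, x₀) :=
        DD3_comm_inner hG3 (eI l) (eI k) (eI s) (x₀, x₀)
      have h2 : DD (eI s) (DD (eI l) (DD (eI k) (unc G))) (x₀, x₀)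
          = DD (eI l) (DD (eI s) (DD (eI k) (unc G))) (x₀, x₀) :=
        DD3_comm_outer hG3 (eI k) (eI l) (eI s) (x₀, x₀)
      rw [h1, h2]
    linarith
  have keyA : ∀ k l s : Fin N, DD (fI s) (DD (eI l) (DD (eI k) (unc A))) (x₀, x₀)
      = (1/2) * (pd (pd (a k) l) s x₀ + pd (pd (a l) k) s x₀) - aikl k l s x₀ := by
    intro k l s
    have p1 := hpd2a k l s
    have p2 := hpd2a l k s
    have ha1 := haiklDD k l s x₀
    have n12 : DD (eI s) (DD (fI l) (DD (eI k) (unc A))) (x₀, x₀)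
        = DD (fI l) (DD (eI s) (DD (eI k) (unc A))) (x₀, x₀) :=
      DD3_comm_outer hA3 (eI k) (fI l) (eI s) (x₀, x₀)
    have n14 : DD (fI s) (DD (fI l) (DD (eI k) (unc A))) (x₀, x₀)
        = -DD (fI k) (DD (eI s) (DD (eI l) (unc A))) (x₀, x₀) := by
      have h1 : DD (fI s) (DD (fI l) (DD (eI k) (unc A))) (x₀, x₀)
          = -DD (eI s) (DD (eI l) (DD (fI k) (unc A))) (x₀, x₀) :=
        congrFun (asym_swap3 hA3 hAsw (eI k) (fI l) (fI s)) (x₀, x₀)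
      have h2 : DD (eI s) (DD (eI l) (DD (fI k) (unc A))) (x₀, x₀)
          = DD (eI s) (DD (fI k) (DD (eI l) (unc A))) (x₀, x₀) :=
        DD3_comm_inner hA3 (fI k) (eI l) (eI s) (x₀, x₀)
      have h3 : DD (eI s) (DD (fI k) (DD (eI l) (unc A))) (x₀, x₀)
          = DD (fI k) (DD (eI s) (DD (eI l) (unc A))) (x₀, x₀) :=
        DD3_comm_outer hA3 (eI l) (fI k) (eI s) (x₀, x₀)
      rw [h1, h2, h3]
    have n21 : DD (eI s) (DD (eI k) (DD (eI l) (unc A))) (x₀, x₀)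
        = DD (eI s) (DD (eI l) (DD (eI k) (unc A))) (x₀, x₀) :=
      DD3_comm_inner hA3 (eI l) (eI k) (eI s) (x₀, x₀)
    have n22 : DD (eI s) (DD (fI k) (DD (eI l) (unc A))) (x₀, x₀)
        = DD (fI k) (DD (eI s) (DD (eI l) (unc A))) (x₀, x₀) :=
      DD3_comm_outer hA3 (eI l) (fI k) (eI s) (x₀, x₀)
    have n23 : DD (fI s) (DD (eI k) (DD (eI l) (unc A))) (x₀, x₀)
        = DD (fI s) (DD (eI l) (DD (eI k) (unc A))) (x₀, x₀) :=
      DD3_comm_inner hA3 (eI l) (eI k) (fI s) (x₀, x₀)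
    have n24 : DD (fI s) (DD (fI k) (DD (eI l) (unc A))) (x₀, x₀)
        = -DD (fI l) (DD (eI s) (DD (eI k) (unc A))) (x₀, x₀) := by
      have h1 : DD (fI s) (DD (fI k) (DD (eI l) (unc A))) (x₀, x₀)
          = -DD (eI s) (DD (eI k) (DD (fI l) (unc A))) (x₀, x₀) :=
        congrFun (asym_swap3 hA3 hAsw (eI l) (fI k) (fI s)) (x₀, x₀)
      have h2 : DD (eI s) (DD (eI k) (DD (fI l) (unc A))) (x₀, x₀)
          = DD (eI s) (DD (fI l) (DD (eI k) (unc A))) (x₀, x₀) :=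
        DD3_comm_inner hA3 (fI l) (eI k) (eI s) (x₀, x₀)
      have h3 : DD (eI s) (DD (fI l) (DD (eI k) (unc A))) (x₀, x₀)
          = DD (fI l) (DD (eI s) (DD (eI k) (unc A))) (x₀, x₀) :=
        DD3_comm_outer hA3 (eI k) (fI l) (eI s) (x₀, x₀)
      rw [h1, h2, h3]
    linarith
  have key3 : ∀ k l s : Fin N, -d2 (d1 (d1 S k) l) s x₀ x₀
      = (1/2) * (pd (g k s) l x₀ + pd (g s l) k x₀ - pd (g l k) s x₀)
        + (-(1/2) * (pd (pd (a k) l) s x₀ + pd (pd (a l) k) s x₀) + aikl k l s x₀) := by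
    intro k l s
    rw [hD3S k l s]
    have h1 := split3 (eI k) (eI l) (fI s) (x₀, x₀)
    have h2 := keyG k l s
    have h3 := keyA k l s
    linarith
  refine ⟨hMeq, hdetM, hMinv, ?_⟩
  intro i k l
  have hstep1 : ∀ s, M⁻¹ i s * d2 (d1 (d1 S k) l) s x₀ x₀
      = tgmat⁻¹ i s * (-d2 (d1 (d1 S k) l) s x₀ x₀) := by
    intro s
    rw [hMinv]
    simp [Matrix.neg_apply]
  have hc : ∀ s, (-d2 (d1 (d1 S k) l) s x₀ x₀) = ∑ p, gmat p s * (γ p k l + β p k l) := by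
    intro s
    have hγβ : ∀ p', γ p' k l + β p' k l = ∑ t, gmat⁻¹ t p' *
        ((1/2) * (pd (g k t) l x₀ + pd (g t l) k x₀ - pd (g l k) t x₀)
          + (-(1/2) * (pd (pd (a k) l) t x₀ + pd (pd (a l) k) t x₀) + aikl k l t x₀)) := by
      intro p'
      rw [hγ p' k l, hβ p' k l, Finset.mul_sum, ← Finset.sum_add_distrib]
      refine Finset.sum_congr rfl fun t _ => ?_
      ring
    have hcontr := contract gmat hgu (fun t =>
        (1/2) * (pd (g k t) l x₀ + pd (g t l) k x₀ - pd (g l k) t x₀)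
          + (-(1/2) * (pd (pd (a k) l) t x₀ + pd (pd (a l) k) t x₀) + aikl k l t x₀)) s
    rw [key3 k l s]
    rw [show (∑ p, gmat p s * (γ p k l + β p k l))
        = ∑ p, gmat p s * ∑ t, gmat⁻¹ t p *
        ((1/2) * (pd (g k t) l x₀ + pd (g t l) k x₀ - pd (g l k) t x₀)
          + (-(1/2) * (pd (pd (a k) l) t x₀ + pd (pd (a l) k) t x₀) + aikl k l t x₀))
      from Finset.sum_congr rfl fun p _ => by rw [hγβ p]]
    exact hcontr.symm
  calc ∑ s, M⁻¹ i s * d2 (d1 (d1 S k) l) s x₀ x₀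
      = ∑ s, tgmat⁻¹ i s * ∑ p, gmat p s * (γ p k l + β p k l) := by
        refine Finset.sum_congr rfl fun s _ => ?_
        rw [hstep1 s, hc s]
    _ = ∑ s, ∑ p, tgmat⁻¹ i s * gmat p s * (γ p k l + β p k l) := by
        refine Finset.sum_congr rfl fun s _ => ?_
        rw [Finset.mul_sum]
        exact Finset.sum_congr rfl fun p _ => by ring
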